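/- arXiv:1710.01624 — 3 statements merged into one kernel-verified Lean document; each statement's English description precedes it below -/
import Mathlib

section
/- If v is the lower capacity v(A) = inf_{P∈Q} P(A) for a nonempty family Q of probability measures, then v is continuous from above: whenever A_n ↓ A with A_n, A ∈ F, we have v(A_n) ↓ v(A). -/
open MeasureTheory Filter Topology
open scoped ENNReal

/-- Continuity from above of the lower capacity `v(A) = inf_{P ∈ Q} P(A)`. -/
theorem lower_capacity_continuous_from_above
    {Ω : Type*} [MeasurableSpace Ω] (Q : Set (Measure Ω)) (hQ : Q.Nonempty)
    (hprob : ∀ P ∈ Q, IsProbabilityMeasure P)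
    (v : Set Ω → ℝ≥0∞) (hv : ∀ A : Set Ω, v A = ⨅ P ∈ Q, P A)
    (A : ℕ → Set Ω) (hmeas : ∀ n, MeasurableSet (A n)) (hanti : Antitone A)
    (S : Set Ω) (hS : S = ⋂ n, A n) (hSmeas : MeasurableSet S) :
    Antitone (fun n => v (A n)) ∧ Tendsto (fun n => v (A n)) atTop (𝓝 (v S)) := by
  have hant : Antitone fun n => v (A n) := by
    intro m n hmn
    simp only [hv]
    exact iInf_mono fun P => iInf_mono fun _ => measure_mono (hanti hmn)
  refine ⟨hant, ?_⟩
  have key : v S = ⨅ n, v (A n) := by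
    simp only [hv, hS]
    rw [iInf_comm]
    refine iInf_congr fun P => ?_
    rw [iInf_comm]
    refine iInf_congr fun hP => ?_
    haveI := hprob P hP
    exact Directed.measure_iInter (fun n => (hmeas n).nullMeasurableSet)
      (directed_of_isDirected_le fun m n hmn => hanti hmn)
      ⟨0, measure_ne_top P _⟩
  rw [key]
  exact tendsto_atTop_iInf hant
end

section
/- Comparison theorem: let {X_i}_{i≥1} be a convolutionary sequence of d-dimensional random vectors on a sublinear expectation space (Ω,H,𝔼), and let {X̂_i}_{i≥1} be an independent sequence on another sublinear expectation space (Ω̂,Ĥ,Ê) with X̂_i identically distributed as X_i for each i. Then for every m ∈ ℕ, n ∈ ℕ⁺ and every bounded Lipschitz function φ on ℝ^d, 𝔼[φ(∑_{i=m+1}^{m+n} X_i)] = Ê[φ(∑_{i=m+1}^{m+n} X̂_i)]. -/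
/-!
Induction on the number `n` of summands. Write `Sₙ = X_{m+1} + ⋯ + X_{m+n}`. Convolution gives
`𝔼[φ(Sₙ₊₁)] = 𝔼[ψ(Sₙ)]` with `ψ(x) = 𝔼[φ(x + X_{m+n+1})]`, and independence gives
`Ê[φ(Ŝₙ₊₁)] = Ê[ψ̂(Ŝₙ)]` with `ψ̂(x) = Ê[φ(x + X̂_{m+n+1})]`. Identical distribution makes `ψ̂ = ψ`,
and sublinearity of `𝔼` keeps `ψ` bounded Lipschitz, so the induction hypothesis applies to `ψ`.
-/

/-- Locally Lipschitz test functions of class `C_{l,Lip}`. -/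
def LocLip {V : Type*} [NormedAddCommGroup V] (φ : V → ℝ) : Prop :=
  ∃ C > (0 : ℝ), ∃ m : ℕ, ∀ x y : V, |φ x - φ y| ≤ C * (1 + ‖x‖ ^ m + ‖y‖ ^ m) * ‖x - y‖

/-- Bounded Lipschitz test functions of class `C_{b,Lip}`. -/
def BddLip {V : Type*} [NormedAddCommGroup V] (φ : V → ℝ) : Prop :=
  (∃ M : ℝ, ∀ x, |φ x| ≤ M) ∧ ∃ C : ℝ, ∀ x y : V, |φ x - φ y| ≤ C * ‖x - y‖

open Finset

section TestFunctions

variable {V W : Type*} [NormedAddCommGroup V] [NormedAddCommGroup W]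

lemma BddLip.locLip {φ : V → ℝ} (hφ : BddLip φ) : LocLip φ := by
  obtain ⟨-, C, hC⟩ := hφ
  refine ⟨|C| + 1, by positivity, 0, fun x y => ?_⟩
  have hxy : 0 ≤ ‖x - y‖ := norm_nonneg _
  calc |φ x - φ y| ≤ C * ‖x - y‖ := hC x y
    _ ≤ (|C| + 1) * (1 + ‖x‖ ^ 0 + ‖y‖ ^ 0) * ‖x - y‖ := by
      simp only [pow_zero]
      nlinarith [le_abs_self C, abs_nonneg C]

lemma BddLip.comp_lipschitzWith {φ : W → ℝ} (hφ : BddLip φ) {L : V → W} {K : NNReal}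
    (hL : LipschitzWith K L) : BddLip (φ ∘ L) := by
  obtain ⟨⟨M, hM⟩, C, hC⟩ := hφ
  refine ⟨⟨M, fun x => hM (L x)⟩, |C| * K, fun x y => ?_⟩
  calc |φ (L x) - φ (L y)| ≤ C * ‖L x - L y‖ := hC _ _
    _ ≤ |C| * ‖L x - L y‖ := by gcongr; exact le_abs_self C
    _ ≤ |C| * (K * ‖x - y‖) := by gcongr; exact hL.norm_sub_le x y
    _ = |C| * K * ‖x - y‖ := by ring

lemma BddLip.comp_add_left {φ : V → ℝ} (hφ : BddLip φ) (a : V) : BddLip (fun x => φ (a + x)) :=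
  hφ.comp_lipschitzWith (isometry_add_left a).lipschitz

end TestFunctions

section Sublinear

variable {Ω : Type*} (E : (Ω → ℝ) → ℝ)

lemma expectation_le_add_const (hmono : ∀ f g : Ω → ℝ, f ≤ g → E f ≤ E g)
    (hconst : ∀ c : ℝ, E (fun _ => c) = c) (hsubadd : ∀ f g : Ω → ℝ, E (f + g) ≤ E f + E g)
    {f g : Ω → ℝ} {c : ℝ} (h : ∀ ω, f ω ≤ g ω + c) : E f ≤ E g + c :=
  calc E f ≤ E (g + fun _ => c) := hmono _ _ h
    _ ≤ E g + E (fun _ => c) := hsubadd _ _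
    _ = E g + c := by rw [hconst]

lemma bddLip_expectation_add (hmono : ∀ f g : Ω → ℝ, f ≤ g → E f ≤ E g)
    (hconst : ∀ c : ℝ, E (fun _ => c) = c) (hsubadd : ∀ f g : Ω → ℝ, E (f + g) ≤ E f + E g)
    {V : Type*} [NormedAddCommGroup V] (Y : Ω → V) {φ : V → ℝ} (hφ : BddLip φ) :
    BddLip (fun x => E (fun ω => φ (x + Y ω))) := by
  obtain ⟨⟨M, hM⟩, C, hC⟩ := hφ
  refine ⟨⟨M, fun x => abs_le.2 ⟨?_, ?_⟩⟩, C, fun x y => abs_sub_le_iff.2 ⟨?_, ?_⟩⟩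
  · simpa only [hconst] using hmono (fun _ => -M) _ fun ω => (abs_le.1 (hM (x + Y ω))).1
  · simpa only [hconst] using hmono _ (fun _ => M) fun ω => (abs_le.1 (hM (x + Y ω))).2
  all_goals
    have key : ∀ a b : V, E (fun ω => φ (a + Y ω)) ≤ E (fun ω => φ (b + Y ω)) + C * ‖a - b‖ :=
      fun a b => expectation_le_add_const E hmono hconst hsubadd fun ω => by
        have := (abs_le.1 (hC (a + Y ω) (b + Y ω))).2
        rw [add_sub_add_right_eq_sub] at this
        linarith
  · dsimp only
    linarith [key x y]
  · dsimp only
    rw [norm_sub_rev]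
    linarith [key y x]

end Sublinear

section BlockSum

variable {V : Type*} [NormedAddCommGroup V] [NormedSpace ℝ V]

/-- `(x, y) ↦ x_m + ⋯ + x_{m+n-1} + y`, with the coordinates of `x` indexed from `0`. -/
noncomputable def blockSumAdd (m n : ℕ) : (Fin (m + n) → V) × V →L[ℝ] V :=
  (∑ j : Fin n, (ContinuousLinearMap.proj (Fin.natAdd m j)).comp
    (ContinuousLinearMap.fst ℝ (Fin (m + n) → V) V)) + ContinuousLinearMap.snd ℝ _ V

lemma sum_fin_add_one_eq_sum_Icc {M : Type*} [AddCommMonoid M] (f : ℕ → M) (m n : ℕ) :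
    ∑ j : Fin n, f (m + j + 1) = ∑ i ∈ Icc (m + 1) (m + n), f i := by
  rw [Fin.sum_univ_eq_sum_range (fun j => f (m + j + 1)), range_eq_Ico,
    ← Ico_add_one_right_eq_Icc]
  convert sum_Ico_add' f 0 n (m + 1) using 3 <;> omega

lemma blockSumAdd_shift (f : ℕ → V) (m n : ℕ) (y : V) :
    blockSumAdd m n (fun j => f (j + 1), y) = (∑ i ∈ Icc (m + 1) (m + n), f i) + y := by
  simp [blockSumAdd, ← sum_fin_add_one_eq_sum_Icc]

end BlockSum

section PartialSums

variable {Ω V : Type*} [NormedAddCommGroup V] (E : (Ω → ℝ) → ℝ) (X : ℕ → Ω → V)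

def IsConvolutionary : Prop :=
  ∀ n k : ℕ, 1 ≤ k → k ≤ n → ∀ φ : V → ℝ, LocLip φ →
    E (fun ω => φ ((∑ i ∈ Icc k n, X i ω) + X (n + 1) ω)) =
      E (fun ω => E (fun ω' => φ ((∑ i ∈ Icc k n, X i ω) + X (n + 1) ω')))

def IsPengIndependent : Prop :=
  ∀ n : ℕ, 1 ≤ n → ∀ φ : (Fin n → V) × V → ℝ, LocLip φ →
    E (fun ω => φ (fun j => X (j + 1) ω, X (n + 1) ω)) =
      E (fun ω => E (fun ω' => φ (fun j => X (j + 1) ω, X (n + 1) ω')))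

variable {E X}

lemma IsConvolutionary.expectation_sum_Icc_succ (hX : IsConvolutionary E X) {m n : ℕ}
    (hn : 1 ≤ n) {φ : V → ℝ} (hφ : LocLip φ) :
    E (fun ω => φ (∑ i ∈ Icc (m + 1) (m + (n + 1)), X i ω)) =
      E (fun ω => E (fun ω' => φ ((∑ i ∈ Icc (m + 1) (m + n), X i ω) + X (m + n + 1) ω'))) := by
  rw [← hX (m + n) (m + 1) (by omega) (by omega) φ hφ]
  congr 1
  funext ω
  exact congrArg φ (sum_Icc_succ_top (a := m + 1) (b := m + n) (by omega) _)

lemma IsPengIndependent.expectation_sum_Icc_succ [NormedSpace ℝ V]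
    (hX : IsPengIndependent E X) {m n : ℕ} (hn : 1 ≤ n) {φ : V → ℝ} (hφ : BddLip φ) :
    E (fun ω => φ (∑ i ∈ Icc (m + 1) (m + (n + 1)), X i ω)) =
      E (fun ω => E (fun ω' => φ ((∑ i ∈ Icc (m + 1) (m + n), X i ω) + X (m + n + 1) ω'))) := by
  have hΦ : LocLip (φ ∘ blockSumAdd m n) :=
    (hφ.comp_lipschitzWith (blockSumAdd (V := V) m n).lipschitz).locLip
  calc E (fun ω => φ (∑ i ∈ Icc (m + 1) (m + (n + 1)), X i ω))
      = E (fun ω => (φ ∘ blockSumAdd m n) (fun j => X (j + 1) ω, X (m + n + 1) ω)) := by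
        congr 1
        funext ω
        rw [Function.comp_apply, blockSumAdd_shift (fun i => X i ω)]
        exact congrArg φ (sum_Icc_succ_top (a := m + 1) (b := m + n) (by omega) _)
    _ = E (fun ω => E (fun ω' => (φ ∘ blockSumAdd m n) (fun j => X (j + 1) ω, X (m + n + 1) ω'))) :=
        hX (m + n) (by omega) _ hΦ
    _ = _ := by
        congr 1
        funext ω
        congr 1
        funext ω'
        rw [Function.comp_apply, blockSumAdd_shift (fun i => X i ω)]

end PartialSums

theorem comparison_theorem_general
    {Ω Ωh : Type*} {d : ℕ}
    (E : (Ω → ℝ) → ℝ) (Eh : (Ωh → ℝ) → ℝ)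
    (hmono : ∀ f g : Ω → ℝ, f ≤ g → E f ≤ E g)
    (hconst : ∀ c : ℝ, E (fun _ => c) = c)
    (hsubadd : ∀ f g : Ω → ℝ, E (f + g) ≤ E f + E g)
    (X : ℕ → Ω → Fin d → ℝ) (Xh : ℕ → Ωh → Fin d → ℝ)
    -- `{Xᵢ}` is a convolutionary sequence: `∑_{i=k}^n Xᵢ` and `X_{n+1}` are of convolution
    (hconv : ∀ n k : ℕ, 1 ≤ k → k ≤ n → ∀ φ : (Fin d → ℝ) → ℝ, LocLip φ →
      E (fun ω => φ ((∑ i ∈ Finset.Icc k n, X i ω) + X (n + 1) ω)) =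
        E (fun ω => E (fun ω' => φ ((∑ i ∈ Finset.Icc k n, X i ω) + X (n + 1) ω'))))
    -- `{X̂ᵢ}` is an independent sequence: `X̂_{n+1}` is independent from `(X̂₁, …, X̂ₙ)`
    (hindep : ∀ n : ℕ, 1 ≤ n → ∀ φ : (Fin n → Fin d → ℝ) × (Fin d → ℝ) → ℝ, LocLip φ →
      Eh (fun ω => φ (fun j => Xh (j + 1) ω, Xh (n + 1) ω)) =
        Eh (fun ω => Eh (fun ω' => φ (fun j => Xh (j + 1) ω, Xh (n + 1) ω'))))
    -- `X̂ᵢ` identically distributed as `Xᵢ`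
    (hid : ∀ i : ℕ, 1 ≤ i → ∀ φ : (Fin d → ℝ) → ℝ, LocLip φ →
      Eh (fun ω => φ (Xh i ω)) = E (fun ω => φ (X i ω))) :
    ∀ (m n : ℕ), 1 ≤ n → ∀ φ : (Fin d → ℝ) → ℝ, BddLip φ →
      E (fun ω => φ (∑ i ∈ Finset.Icc (m + 1) (m + n), X i ω)) =
        Eh (fun ω => φ (∑ i ∈ Finset.Icc (m + 1) (m + n), Xh i ω)) := by
  intro m n hn
  induction n, hn using Nat.le_induction with
  | base =>
    intro φ hφ
    simpa using (hid (m + 1) (by omega) φ hφ.locLip).symm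
  | succ n hn ih =>
    intro φ hφ
    set ψ : (Fin d → ℝ) → ℝ := fun x => E (fun ω' => φ (x + X (m + n + 1) ω'))
    have hψ : BddLip ψ := bddLip_expectation_add E hmono hconst hsubadd _ hφ
    calc E (fun ω => φ (∑ i ∈ Icc (m + 1) (m + (n + 1)), X i ω))
        = E (fun ω => ψ (∑ i ∈ Icc (m + 1) (m + n), X i ω)) :=
          IsConvolutionary.expectation_sum_Icc_succ hconv hn hφ.locLip
      _ = Eh (fun ω => ψ (∑ i ∈ Icc (m + 1) (m + n), Xh i ω)) := ih ψ hψ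
      _ = Eh (fun ω => Eh (fun ω' => φ ((∑ i ∈ Icc (m + 1) (m + n), Xh i ω) + Xh (m + n + 1) ω'))) :=
          congrArg Eh <| funext fun ω =>
            (hid _ (by omega) _ (hφ.comp_add_left _).locLip).symm
      _ = Eh (fun ω => φ (∑ i ∈ Icc (m + 1) (m + (n + 1)), Xh i ω)) :=
          (IsPengIndependent.expectation_sum_Icc_succ hindep hn hφ).symm

/-- Comparison theorem: the partial sums of a convolutionary sequence `{Xᵢ}` and of a
Peng-independent sequence `{X̂ᵢ}` with `X̂ᵢ ≗ Xᵢ` are identically distributed: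
`𝔼[φ(∑_{i=m+1}^{m+n} Xᵢ)] = Ê[φ(∑_{i=m+1}^{m+n} X̂ᵢ)]` for every bounded Lipschitz `φ`. -/
theorem comparison_theorem
    {Ω Ωh : Type*} {d : ℕ}
    (E : (Ω → ℝ) → ℝ) (Eh : (Ωh → ℝ) → ℝ)
    (hmono : ∀ f g : Ω → ℝ, f ≤ g → E f ≤ E g)
    (hconst : ∀ c : ℝ, E (fun _ => c) = c)
    (hsubadd : ∀ f g : Ω → ℝ, E (f + g) ≤ E f + E g)
    (hpos : ∀ l : ℝ, 0 ≤ l → ∀ f : Ω → ℝ, E (l • f) = l * E f)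
    (hmonoh : ∀ f g : Ωh → ℝ, f ≤ g → Eh f ≤ Eh g)
    (hconsth : ∀ c : ℝ, Eh (fun _ => c) = c)
    (hsubaddh : ∀ f g : Ωh → ℝ, Eh (f + g) ≤ Eh f + Eh g)
    (hposh : ∀ l : ℝ, 0 ≤ l → ∀ f : Ωh → ℝ, Eh (l • f) = l * Eh f)
    (X : ℕ → Ω → Fin d → ℝ) (Xh : ℕ → Ωh → Fin d → ℝ)
    -- `{Xᵢ}` is a convolutionary sequence: `∑_{i=k}^n Xᵢ` and `X_{n+1}` are of convolution
    (hconv : ∀ n k : ℕ, 1 ≤ k → k ≤ n → ∀ φ : (Fin d → ℝ) → ℝ, LocLip φ →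
      E (fun ω => φ ((∑ i ∈ Finset.Icc k n, X i ω) + X (n + 1) ω)) =
        E (fun ω => E (fun ω' => φ ((∑ i ∈ Finset.Icc k n, X i ω) + X (n + 1) ω'))))
    -- `{X̂ᵢ}` is an independent sequence: `X̂_{n+1}` is independent from `(X̂₁, …, X̂ₙ)`
    (hindep : ∀ n : ℕ, 1 ≤ n → ∀ φ : (Fin n → Fin d → ℝ) × (Fin d → ℝ) → ℝ, LocLip φ →
      Eh (fun ω => φ (fun j => Xh (j + 1) ω, Xh (n + 1) ω)) =
        Eh (fun ω => Eh (fun ω' => φ (fun j => Xh (j + 1) ω, Xh (n + 1) ω'))))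
    -- `X̂ᵢ` identically distributed as `Xᵢ`
    (hid : ∀ i : ℕ, 1 ≤ i → ∀ φ : (Fin d → ℝ) → ℝ, LocLip φ →
      Eh (fun ω => φ (Xh i ω)) = E (fun ω => φ (X i ω))) :
    ∀ (m n : ℕ), 1 ≤ n → ∀ φ : (Fin d → ℝ) → ℝ, BddLip φ →
      E (fun ω => φ (∑ i ∈ Finset.Icc (m + 1) (m + n), X i ω)) =
        Eh (fun ω => φ (∑ i ∈ Finset.Icc (m + 1) (m + n), Xh i ω)) :=
  comparison_theorem_general E Eh hmono hconst hsubadd X Xh hconv hindep hid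
end

section
/- Two maximal distributed random vectors are identically distributed if and only if their generating functions agree: if η₁, η₂ are d-dimensional maximal distributed random vectors on sublinear expectation spaces (Ω₁,H₁,𝔼₁) and (Ω₂,H₂,𝔼₂), then η₁ and η₂ are identically distributed iff 𝔼₁[⟨p,η₁⟩] = 𝔼₂[⟨p,η₂⟩] for every p ∈ ℝ^d. -/
lemma locLip_linear {d : ℕ} (p : Fin d → ℝ) :
    LocLip (fun x : Fin d → ℝ => ∑ j, p j * x j) := by
  refine ⟨(∑ j, |p j|) + 1, by positivity, 0, fun x y => ?_⟩
  have h1 : (∑ j, p j * x j) - ∑ j, p j * y j = ∑ j, p j * (x j - y j) := by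
    rw [← Finset.sum_sub_distrib]; congr 1; ext j; ring
  rw [h1]
  have h2 : |∑ j, p j * (x j - y j)| ≤ (∑ j, |p j|) * ‖x - y‖ := by
    calc |∑ j, p j * (x j - y j)| ≤ ∑ j, |p j * (x j - y j)| :=
          Finset.abs_sum_le_sum_abs _ _
      _ ≤ ∑ j, |p j| * ‖x - y‖ := by
          refine Finset.sum_le_sum fun j _ => ?_
          rw [abs_mul]
          refine mul_le_mul_of_nonneg_left ?_ (abs_nonneg _)
          have := norm_le_pi_norm (x - y) j
          simpa using this
      _ = (∑ j, |p j|) * ‖x - y‖ := by rw [Finset.sum_mul]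
  have hs : (0:ℝ) ≤ ∑ j, |p j| := Finset.sum_nonneg fun j _ => abs_nonneg _
  have hn : (0:ℝ) ≤ ‖x - y‖ := norm_nonneg _
  simp only [pow_zero]
  nlinarith [h2]

lemma key_eq {d : ℕ} (f : (Fin d → ℝ) →L[ℝ] ℝ) (a : Fin d → ℝ) :
    ∑ j, f (Pi.single j 1) * a j = f a := by
  have ha : ∑ j, (a j) • (Pi.single j (1:ℝ) : Fin d → ℝ) = a := by
    have : ∀ j, (a j) • (Pi.single j (1:ℝ) : Fin d → ℝ) = Pi.single j (a j) := by
      intro j; ext k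
      by_cases h : k = j <;> simp [Pi.single_apply, h]
    simp_rw [this]
    exact Finset.univ_sum_single a
  conv_rhs => rw [← ha]
  rw [map_sum]
  refine Finset.sum_congr rfl fun j _ => ?_
  rw [map_smul, smul_eq_mul, mul_comm]

lemma subset_of_supports {d : ℕ} {Γ₁ Γ₂ : Set (Fin d → ℝ)}
    (h₁b : Bornology.IsBounded Γ₁) (h₂ne : Γ₂.Nonempty) (h₂c : IsClosed Γ₂)
    (h₂cv : Convex ℝ Γ₂)
    (h : ∀ p : Fin d → ℝ, sSup ((fun x => ∑ j, p j * x j) '' Γ₁)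
        = sSup ((fun x => ∑ j, p j * x j) '' Γ₂)) : Γ₁ ⊆ Γ₂ := by
  intro x hx
  by_contra hxn
  obtain ⟨f, u, hfb, hux⟩ := geometric_hahn_banach_closed_point h₂cv h₂c hxn
  set p : Fin d → ℝ := fun j => f (Pi.single j 1) with hp
  have hφf : (fun x : Fin d → ℝ => ∑ j, p j * x j) = fun x => f x :=
    funext fun a => key_eq f a
  have hb1 : BddAbove ((fun x : Fin d → ℝ => ∑ j, p j * x j) '' Γ₁) := by
    rw [hφf]
    exact ((f.lipschitz.isBounded_image h₁b).bddAbove)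
  have hle1 : f x ≤ sSup ((fun x : Fin d → ℝ => ∑ j, p j * x j) '' Γ₁) := by
    refine le_csSup hb1 ?_
    refine ⟨x, hx, ?_⟩
    exact key_eq f x
  have hle2 : sSup ((fun x : Fin d → ℝ => ∑ j, p j * x j) '' Γ₂) ≤ u := by
    refine csSup_le (h₂ne.image _) ?_
    rintro y ⟨b, hb, rfl⟩
    have := (hfb b hb).le
    calc ∑ j, p j * b j = f b := key_eq f b
      _ ≤ u := this
  have := h p
  linarith [hle1, hle2, hux]

/-- Two maximal distributed random vectors are identically distributed if and only if
`𝔼₁[⟨p,η₁⟩] = 𝔼₂[⟨p,η₂⟩]` for every `p ∈ ℝ^d`. -/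
theorem maximal_identically_distributed_iff
    {Ω₁ Ω₂ : Type*} {d : ℕ}
    (E₁ : (Ω₁ → ℝ) → ℝ) (E₂ : (Ω₂ → ℝ) → ℝ)
    (η₁ : Ω₁ → Fin d → ℝ) (η₂ : Ω₂ → Fin d → ℝ)
    (Γ₁ Γ₂ : Set (Fin d → ℝ))
    (hΓ₁ : Γ₁.Nonempty ∧ Bornology.IsBounded Γ₁ ∧ IsClosed Γ₁ ∧ Convex ℝ Γ₁)
    (hΓ₂ : Γ₂.Nonempty ∧ Bornology.IsBounded Γ₂ ∧ IsClosed Γ₂ ∧ Convex ℝ Γ₂)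
    (hmax₁ : ∀ φ : (Fin d → ℝ) → ℝ, LocLip φ →
      E₁ (fun ω => φ (η₁ ω)) = sSup (φ '' Γ₁))
    (hmax₂ : ∀ φ : (Fin d → ℝ) → ℝ, LocLip φ →
      E₂ (fun ω => φ (η₂ ω)) = sSup (φ '' Γ₂)) :
    (∀ φ : (Fin d → ℝ) → ℝ, LocLip φ →
        E₁ (fun ω => φ (η₁ ω)) = E₂ (fun ω => φ (η₂ ω))) ↔
      (∀ p : Fin d → ℝ,
        E₁ (fun ω => ∑ j, p j * η₁ ω j) = E₂ (fun ω => ∑ j, p j * η₂ ω j)) := by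
  constructor
  · intro h p
    exact h (fun x => ∑ j, p j * x j) (locLip_linear p)
  · intro h φ hφ
    have hsup : ∀ p : Fin d → ℝ, sSup ((fun x => ∑ j, p j * x j) '' Γ₁)
        = sSup ((fun x => ∑ j, p j * x j) '' Γ₂) := by
      intro p
      have := h p
      rw [hmax₁ _ (locLip_linear p), hmax₂ _ (locLip_linear p)] at this
      exact this
    have hΓ : Γ₁ = Γ₂ :=
      Set.Subset.antisymm
        (subset_of_supports hΓ₁.2.1 hΓ₂.1 hΓ₂.2.2.1 hΓ₂.2.2.2 hsup)
        (subset_of_supports hΓ₂.2.1 hΓ₁.1 hΓ₁.2.2.1 hΓ₁.2.2.2 fun p => (hsup p).symm)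
    rw [hmax₁ φ hφ, hmax₂ φ hφ, hΓ]
end
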